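/- arXiv:1707.01483 — 3 statements merged into one kernel-verified Lean document; each statement's English description precedes it below -/
import Mathlib

section
/- (Rigidity of fiber isotropy) Let M = Q ×_r F be a pseudo-Riemannian warped product with dim F = n ≥ 3. If the fiber block of the Einstein tensor satisfies G_F = λ h for some function λ : M → ℝ, then λ is constant along F and (F,h) is an Einstein manifold. -/
/-!
Subtracting the warping terms from `G_F = λ h` leaves `Ric^h = (λ + μ + S^h/2) h`, where `μ`
depends on the base point only. So `Ric^h` is pointwise proportional to `h`, and Schur's lemma
makes the factor a constant `c`. Tracing gives `S^h = n c`, and comparing coefficients of the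
nowhere-vanishing `h` yields `λ(q, f) = (1 - n/2) c - μ(q)`, which does not depend on `f`.
-/

theorem eq_of_forall_mul_eq_mul {V : Type*} {B : V → V → ℝ} (hB : ∃ v w, B v w ≠ 0) {a b : ℝ}
    (hab : ∀ v w, a * B v w = b * B v w) : a = b := by
  obtain ⟨v, w, hvw⟩ := hB
  exact mul_right_cancel₀ hvw (hab v w)

/-- The base-dependent coefficient `μ` in `G_F = G^h - μ h`. -/
noncomputable def warpedFiberShift {Q : Type*} (n : ℕ) (r Sg Δr drdr : Q → ℝ) (q : Q) : ℝ :=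
  r q ^ 2 / 2 * Sg q - ((n : ℝ) - 1) * r q * (Δr q + ((n : ℝ) - 2) / 2 * drdr q)

section

variable {Q F V : Type*} (n : ℕ) (h Ric G : F → V → V → ℝ) (S : F → ℝ) (r Sg Δr drdr : Q → ℝ)
  (GF : Q × F → V → V → ℝ) (lam : Q × F → ℝ)

theorem ricci_eq_of_fiberEinsteinBlock_eq_smul
    (hG : ∀ f v w, G f v w = Ric f v w - S f / 2 * h f v w)
    (hGF : ∀ p v w, GF p v w
        = G p.2 v w - r p.1 ^ 2 / 2 * Sg p.1 * h p.2 v w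
          + ((n : ℝ) - 1) * r p.1 * (Δr p.1 + ((n : ℝ) - 2) / 2 * drdr p.1) * h p.2 v w)
    (hlam : ∀ p v w, GF p v w = lam p * h p.2 v w) (q : Q) (f : F) (v w : V) :
    Ric f v w = (lam (q, f) + warpedFiberShift n r Sg Δr drdr q + S f / 2) * h f v w := by
  unfold warpedFiberShift
  linear_combination hlam (q, f) v w - hGF (q, f) v w - hG f v w

theorem fiberIsotropy_eq_of_ricci_eq_smul (hne : ∀ f, ∃ v w, h f v w ≠ 0)
    (hRic : ∀ q f v w,
      Ric f v w = (lam (q, f) + warpedFiberShift n r Sg Δr drdr q + S f / 2) * h f v w)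
    {c : ℝ} (hc : ∀ f v w, Ric f v w = c * h f v w) (hS : ∀ f, S f = n * c) (q : Q) (f : F) :
    lam (q, f) = (1 - (n : ℝ) / 2) * c - warpedFiberShift n r Sg Δr drdr q := by
  have hcoeff : lam (q, f) + warpedFiberShift n r Sg Δr drdr q + S f / 2 = c :=
    eq_of_forall_mul_eq_mul (hne f) fun v w => (hRic q f v w).symm.trans (hc f v w)
  rw [hS f] at hcoeff
  linarith

end

theorem fiber_isotropy_rigidity_general
    {Q F VF : Type*} [AddCommGroup VF] [Module ℝ VF]
    (n : ℕ) (hQ : Nonempty Q)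
    (hB : F → VF →ₗ[ℝ] VF →ₗ[ℝ] ℝ)            -- the fiber metric h
    (hBne : ∀ f, ∃ v w, hB f v w ≠ 0)           -- h is a metric, nowhere zero
    (Rich Gh : F → VF → VF → ℝ)                  -- Ric^h and G^h
    (Sh : F → ℝ)                                 -- scalar curvature of h
    (hGh : ∀ f v w, Gh f v w = Rich f v w - Sh f / 2 * hB f v w)
    -- trace compatibility: if Ric^h = c·h at f then S^h = n·c at f
    (hShtr : ∀ f (c : ℝ), (∀ v w, Rich f v w = c * hB f v w) → Sh f = n * c)
    (r Sg Δr drdr : Q → ℝ)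
    (GF : Q × F → VF → VF → ℝ)                   -- fiber block of the Einstein tensor
    (hGF : ∀ p v w, GF p v w
        = Gh p.2 v w - r p.1 ^ 2 / 2 * Sg p.1 * hB p.2 v w
          + ((n : ℝ) - 1) * r p.1 * (Δr p.1 + ((n : ℝ) - 2) / 2 * drdr p.1)
            * hB p.2 v w)
    (lam : Q × F → ℝ)
    (hlam : ∀ p v w, GF p v w = lam p * hB p.2 v w)   -- G_F = λ h
    -- Schur's lemma in dimension n ≥ 3
    (hSchur : (∀ f, ∃ c : ℝ, ∀ v w, Rich f v w = c * hB f v w) →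
        ∃ c : ℝ, ∀ f v w, Rich f v w = c * hB f v w) :
    (∀ q (f f' : F), lam (q, f) = lam (q, f'))
    ∧ (∃ c : ℝ, ∀ f v w, Rich f v w = c * hB f v w) := by
  obtain ⟨q₀⟩ := hQ
  have hRic := ricci_eq_of_fiberEinsteinBlock_eq_smul n (fun f v w => hB f v w) Rich Gh Sh
    r Sg Δr drdr GF lam hGh hGF hlam
  obtain ⟨c, hc⟩ := hSchur fun f => ⟨_, hRic q₀ f⟩
  have hlam_eq := fiberIsotropy_eq_of_ricci_eq_smul n (fun f v w => hB f v w) Rich Sh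
    r Sg Δr drdr lam hBne hRic hc fun f => hShtr f c (hc f)
  exact ⟨fun q f f' => by rw [hlam_eq, hlam_eq], c, hc⟩

/-- (Rigidity of fiber isotropy) Let `M = Q ×_r F` be a pseudo-Riemannian warped
product with `dim F = n ≥ 3`.  If the fiber block of the Einstein tensor satisfies
`G_F = λ h` for some function `λ : M → ℝ`, then `λ` is constant along `F` and `(F,h)`
is an Einstein manifold.  Here
`G_F = G^h − (r²/2) S^g h + (n−1) r [Δ_g r + ((n−2)/2)⟨dr,dr⟩_g] h` with
`G^h = Ric^h − (S^h/2) h`, and Schur's lemma (a Riemannian manifold of dimension ≥ 3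
with Ricci pointwise proportional to the metric is Einstein) is given as context. -/
theorem fiber_isotropy_rigidity
    {Q F VF : Type*} [AddCommGroup VF] [Module ℝ VF]
    (n : ℕ) (hn : 3 ≤ n) (hQ : Nonempty Q)
    (hB : F → VF →ₗ[ℝ] VF →ₗ[ℝ] ℝ)            -- the fiber metric h
    (hBne : ∀ f, ∃ v w, hB f v w ≠ 0)           -- h is a metric, nowhere zero
    (Rich Gh : F → VF → VF → ℝ)                  -- Ric^h and G^h
    (Sh : F → ℝ)                                 -- scalar curvature of h
    (hGh : ∀ f v w, Gh f v w = Rich f v w - Sh f / 2 * hB f v w)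
    -- trace compatibility: if Ric^h = c·h at f then S^h = n·c at f
    (hShtr : ∀ f (c : ℝ), (∀ v w, Rich f v w = c * hB f v w) → Sh f = n * c)
    (r Sg Δr drdr : Q → ℝ) (hr : ∀ q, 0 < r q)
    (GF : Q × F → VF → VF → ℝ)                   -- fiber block of the Einstein tensor
    (hGF : ∀ p v w, GF p v w
        = Gh p.2 v w - r p.1 ^ 2 / 2 * Sg p.1 * hB p.2 v w
          + ((n : ℝ) - 1) * r p.1 * (Δr p.1 + ((n : ℝ) - 2) / 2 * drdr p.1)
            * hB p.2 v w)
    (lam : Q × F → ℝ)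
    (hlam : ∀ p v w, GF p v w = lam p * hB p.2 v w)   -- G_F = λ h
    -- Schur's lemma in dimension n ≥ 3
    (hSchur : (∀ f, ∃ c : ℝ, ∀ v w, Rich f v w = c * hB f v w) →
        ∃ c : ℝ, ∀ f v w, Rich f v w = c * hB f v w) :
    (∀ q (f f' : F), lam (q, f) = lam (q, f'))
    ∧ (∃ c : ℝ, ∀ f v w, Rich f v w = c * hB f v w) :=
  fiber_isotropy_rigidity_general n hQ hB hBne Rich Gh Sh hGh hShtr r Sg Δr drdr GF hGF lam hlam
    hSchur
end

section
/- (Black hole topology along a null ray) Let (M,g̃) be a warped product spacetime satisfying the dominant energy condition, γ a null geodesic segment in (Q,g) with geodesic tangent L, and N the transverse null field with ⟨L,N⟩ = −1, ∇_L N = 0. If at a point p on γ one has N(r) > 0 and at a later point q one has N(r) ≤ 0, then the scalar curvature S^h of the fiber is strictly positive. -/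
/-! If `S^h ≤ 0`, the propagation equation and the dominant energy condition make `N(rⁿ)`
nondecreasing along `γ`; but `N(rⁿ) = n r^{n−1} N(r)` has the sign of `N(r)`, which drops
from positive at `p` to nonpositive at `q`. -/

/-- (Black hole topology along a null ray) Let `(M,g̃)` be a warped product spacetime
satisfying the dominant energy condition, `γ` a null geodesic segment in `(Q,g)` with
geodesic tangent `L`, and `N` the transverse null field with `⟨L,N⟩ = −1`, `∇_L N = 0`.
If at a point `p = γ(tp)` one has `N(r) > 0` and at a later point `q = γ(tq)` one has
`N(r) ≤ 0`, then the scalar curvature `S^h` of the fiber is strictly positive.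
Along `γ` (parametrized by `t ∈ ℝ`): `N(rⁿ) = n r^{n−1} N(r)`, the propagation
equation `(N(rⁿ))' = rⁿ G_Q(L,N) − (r^{n−2}/2) S^h` holds, and the dominant energy
condition gives `G_Q(L,N) ≥ 0`. -/
theorem black_hole_topology_null_ray
    (n : ℕ) (hn : 2 ≤ n)
    (Sh : ℝ)                                  -- the (constant) fiber scalar curvature
    (r Nr Nrn GLN : ℝ → ℝ)                    -- r, N(r), N(rⁿ), G_Q(L,N) along γ
    (hr : ∀ t, 0 < r t)
    (hNrn : ∀ t, Nrn t = (n : ℝ) * r t ^ (n - 1) * Nr t)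
    (hdiff : Differentiable ℝ Nrn)
    -- the cross propagation equation along the null geodesic γ
    (hprop : ∀ t, deriv Nrn t = r t ^ n * GLN t - r t ^ (n - 2) / 2 * Sh)
    -- dominant energy condition: G_Q(L,N) ≥ 0 for future-directed null L, N
    (hDEC : ∀ t, 0 ≤ GLN t)
    (tp tq : ℝ) (htpq : tp < tq)               -- q is to the future of p
    (hNp : 0 < Nr tp)                          -- N(r) > 0 at p
    (hNq : Nr tq ≤ 0) :                        -- N(r) ≤ 0 at q
    0 < Sh := by
  by_contra! hSh
  have hmono : Monotone Nrn := monotone_of_deriv_nonneg hdiff fun t => by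
    have hcurv : r t ^ (n - 2) / 2 * Sh ≤ 0 :=
      mul_nonpos_of_nonneg_of_nonpos (by have := hr t; positivity) hSh
    rw [hprop t]
    linarith [mul_nonneg (pow_pos (hr t) n).le (hDEC t)]
  have hcoef : ∀ t, 0 < (n : ℝ) * r t ^ (n - 1) := fun t =>
    mul_pos (Nat.cast_pos.mpr (by omega)) (pow_pos (hr t) _)
  have hpq := hmono htpq.le
  rw [hNrn, hNrn] at hpq
  linarith [mul_pos (hcoef tp) hNp, mul_nonpos_of_nonneg_of_nonpos (hcoef tq).le hNq]
end

section
/- For a perfect fluid on a warped product spacetime, if the stress-energy tensor T = (p+ρ)ξ⊗ξ + p g̃ is block diagonal with respect to the warped product splitting (as forced by Einstein's equations), then the unit timelike velocity field ξ must be tangent to the base Q, and consequently the fiber block T_F is proportional to h. -/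
/-!
Evaluating the perfect-fluid tensor on a base vector `x` and a fiber vector `w` gives
`(p + ρ) r² g(ξ_Q, x) h(ξ_F, w)`, so block diagonality forces `g(ξ_Q, ·) ⊗ h(ξ_F, ·) = 0`.
If `ξ_F ≠ 0` then `h(ξ_F, ξ_F) > 0`, hence `g(ξ_Q, ·) = 0` and `ξ_Q = 0` by nondegeneracy;
but then `g̃(ξ, ξ) = r² h(ξ_F, ξ_F) ≥ 0`, contradicting that `ξ` is timelike.
With `ξ_F = 0` the fiber block is `p g̃ = p r² h`.
-/

section WarpedProduct

variable {VQ VF : Type*} [AddCommGroup VQ] [Module ℝ VQ] [AddCommGroup VF] [Module ℝ VF]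

def warpedMetric (g : VQ →ₗ[ℝ] VQ →ₗ[ℝ] ℝ) (h : VF →ₗ[ℝ] VF →ₗ[ℝ] ℝ) (r : ℝ)
    (X Y : VQ × VF) : ℝ :=
  g X.1 Y.1 + r ^ 2 * h X.2 Y.2

def perfectFluidTensor {V : Type*} (p ρ : ℝ) (gt : V → V → ℝ) (ξ X Y : V) : ℝ :=
  (p + ρ) * gt ξ X * gt ξ Y + p * gt X Y

variable (g : VQ →ₗ[ℝ] VQ →ₗ[ℝ] ℝ) (h : VF →ₗ[ℝ] VF →ₗ[ℝ] ℝ) (r : ℝ)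

theorem warpedMetric_self_nonneg_of_fst_eq_zero (hhpos : ∀ v, 0 ≤ h v v) {ξ : VQ × VF}
    (hξ : ξ.1 = 0) : 0 ≤ warpedMetric g h r ξ ξ := by
  simp only [warpedMetric, hξ, map_zero, zero_add]
  exact mul_nonneg (sq_nonneg r) (hhpos _)

theorem perfectFluidTensor_warpedMetric_base_fiber (p ρ : ℝ) (ξ : VQ × VF) (x : VQ) (w : VF) :
    perfectFluidTensor p ρ (warpedMetric g h r) ξ (x, 0) (0, w) =
      (p + ρ) * r ^ 2 * (g ξ.1 x * h ξ.2 w) := by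
  simp only [perfectFluidTensor, warpedMetric, map_zero, LinearMap.zero_apply]
  ring

theorem perfectFluidTensor_warpedMetric_fiber_fiber (p ρ : ℝ) {ξ : VQ × VF} (hξ : ξ.2 = 0)
    (v w : VF) :
    perfectFluidTensor p ρ (warpedMetric g h r) ξ (0, v) (0, w) = p * r ^ 2 * h v w := by
  simp only [perfectFluidTensor, warpedMetric, hξ, map_zero, LinearMap.zero_apply]
  ring

theorem snd_eq_zero_of_timelike_of_base_fiber_orthogonal
    (hgnondeg : ∀ x : VQ, (∀ y, g x y = 0) → x = 0)
    (hhpos : ∀ v, 0 ≤ h v v) (hhdef : ∀ v, h v v = 0 → v = 0)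
    {ξ : VQ × VF} (htimelike : warpedMetric g h r ξ ξ < 0)
    (horth : ∀ x w, g ξ.1 x * h ξ.2 w = 0) : ξ.2 = 0 := by
  by_contra hne
  have hξ1 : ξ.1 = 0 :=
    hgnondeg _ fun x => (mul_eq_zero.1 (horth x ξ.2)).resolve_right (mt (hhdef _) hne)
  exact htimelike.not_ge (warpedMetric_self_nonneg_of_fst_eq_zero g h r hhpos hξ1)

end WarpedProduct

theorem fluid_velocity_tangent_to_base_general
    {VQ VF : Type*} [AddCommGroup VQ] [Module ℝ VQ]
    [AddCommGroup VF] [Module ℝ VF]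
    (p ρ r : ℝ) (hr : 0 < r) (hpρ : 0 < p + ρ)
    (g : VQ →ₗ[ℝ] VQ →ₗ[ℝ] ℝ)                -- the Lorentzian base metric
    (hgnondeg : ∀ x : VQ, (∀ y, g x y = 0) → x = 0)
    (h : VF →ₗ[ℝ] VF →ₗ[ℝ] ℝ)                -- the Riemannian fiber metric
    (hhpos : ∀ v, 0 ≤ h v v)
    (hhdef : ∀ v, h v v = 0 → v = 0)           -- h is positive definite
    (ξ : VQ × VF)                               -- the fluid velocity
    (gt : VQ × VF → VQ × VF → ℝ)               -- the warped metric g̃ = g + r²h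
    (hgt : ∀ X Y, gt X Y = g X.1 Y.1 + r ^ 2 * h X.2 Y.2)
    (hunit : gt ξ ξ = -1)                       -- ξ is unit timelike
    (T : VQ × VF → VQ × VF → ℝ)                -- the perfect-fluid stress tensor
    (hT : ∀ X Y, T X Y = (p + ρ) * gt ξ X * gt ξ Y + p * gt X Y)
    -- T is block diagonal with respect to TQ ⊕ TF
    (hblock : ∀ (x : VQ) (w : VF), T (x, 0) (0, w) = 0) :
    ξ.2 = 0 ∧ ∃ c : ℝ, ∀ v w : VF, T (0, v) (0, w) = c * h v w := by
  obtain rfl : gt = warpedMetric g h r := funext₂ hgt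
  obtain rfl : T = perfectFluidTensor p ρ (warpedMetric g h r) ξ := funext₂ hT
  have horth : ∀ x w, g ξ.1 x * h ξ.2 w = 0 := fun x w => by
    have hxw := hblock x w
    rw [perfectFluidTensor_warpedMetric_base_fiber] at hxw
    exact (mul_eq_zero.1 hxw).resolve_left (by positivity)
  have hξ : ξ.2 = 0 := snd_eq_zero_of_timelike_of_base_fiber_orthogonal g h r hgnondeg hhpos
    hhdef (by rw [hunit]; norm_num) horth
  exact ⟨hξ, p * r ^ 2, perfectFluidTensor_warpedMetric_fiber_fiber g h r p ρ hξ⟩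

/-- For a perfect fluid on a warped product spacetime `M = Q ×_r F` with
`g̃ = g + r² h`, if the stress-energy tensor `T = (p+ρ) ξ^♭ ⊗ ξ^♭ + p g̃` is block
diagonal with respect to the warped product splitting `TQ ⊕ TF` (as forced by
Einstein's equations), then the unit timelike velocity field `ξ` must be tangent to
the base `Q` (its fiber component vanishes), and consequently the fiber block `T_F`
is proportional to `h`. -/
theorem fluid_velocity_tangent_to_base
    {VQ VF : Type*} [AddCommGroup VQ] [Module ℝ VQ]
    [AddCommGroup VF] [Module ℝ VF]
    (p ρ r : ℝ) (hr : 0 < r) (hpρ : 0 < p + ρ)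
    (g : VQ →ₗ[ℝ] VQ →ₗ[ℝ] ℝ)                -- the Lorentzian base metric
    (hgnondeg : ∀ x : VQ, (∀ y, g x y = 0) → x = 0)
    (h : VF →ₗ[ℝ] VF →ₗ[ℝ] ℝ)                -- the Riemannian fiber metric
    (hhsymm : ∀ v w, h v w = h w v)
    (hhpos : ∀ v, 0 ≤ h v v)
    (hhdef : ∀ v, h v v = 0 → v = 0)           -- h is positive definite
    (ξ : VQ × VF)                               -- the fluid velocity
    (gt : VQ × VF → VQ × VF → ℝ)               -- the warped metric g̃ = g + r²h
    (hgt : ∀ X Y, gt X Y = g X.1 Y.1 + r ^ 2 * h X.2 Y.2)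
    (hunit : gt ξ ξ = -1)                       -- ξ is unit timelike
    (T : VQ × VF → VQ × VF → ℝ)                -- the perfect-fluid stress tensor
    (hT : ∀ X Y, T X Y = (p + ρ) * gt ξ X * gt ξ Y + p * gt X Y)
    -- T is block diagonal with respect to TQ ⊕ TF
    (hblock : ∀ (x : VQ) (w : VF), T (x, 0) (0, w) = 0) :
    ξ.2 = 0 ∧ ∃ c : ℝ, ∀ v w : VF, T (0, v) (0, w) = c * h v w :=
  fluid_velocity_tangent_to_base_general p ρ r hr hpρ g hgnondeg h hhpos hhdef ξ gt hgt hunit T hT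
    hblock
end
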